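/- For every complex number q with |q| < 1, ∑_{n≥1} q^n (q^n; q)_∞ (q^3; q^3)_{n−1} / [ (−q^{n+1}; q)_∞ (−q^3; q^3)_n ] = (1/2)·( (q^3; q^3)_∞/(−q^3; q^3)_∞ − (q; q)_∞/(−q; q)_∞ ). -/

import Mathlib

/-- Finite q-Pochhammer symbol `(a; q)_n = ∏_{j=0}^{n-1} (1 - a q^j)`. -/
noncomputable def qPoch (q a : ℂ) (n : ℕ) : ℂ := ∏ j ∈ Finset.range n, (1 - a * q ^ j)

/-- Infinite q-Pochhammer symbol `(a; q)_∞ = ∏_{j=0}^{∞} (1 - a q^j)`. -/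
noncomputable def qPochInf (q a : ℂ) : ℂ := ∏' j : ℕ, (1 - a * q ^ j)

/-!
Write `x = q^(n+1)` and `F_n = (q^(n+1);q)_∞ (q^3;q^3)_n / ((-q^(n+1);q)_∞ (-q^3;q^3)_n)`.
Peeling one factor off each Pochhammer symbol, the identity
`2x(1 - x)/(1 + x^3) = (1 - x^3)/(1 + x^3) - (1 - x)/(1 + x)`
shows that the `n`-th summand equals `(F_(n+1) - F_n)/2`, so the series telescopes to
`(lim F_n - F_0)/2`, with `F_0 = (q;q)_∞/(-q;q)_∞` and `F_n → (q^3;q^3)_∞/(-q^3;q^3)_∞`.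
The series converges absolutely because its `n`-th term is `q^n` times a convergent sequence.
-/

open Filter Finset Topology Asymptotics

theorem hasSum_succ_sub_of_tendsto {G : Type*} [AddCommGroup G] [TopologicalSpace G]
    [IsTopologicalAddGroup G] [T2Space G] {g : ℕ → G} {L : G}
    (hs : Summable fun n ↦ g (n + 1) - g n) (hg : Tendsto g atTop (𝓝 L)) :
    HasSum (fun n ↦ g (n + 1) - g n) (L - g 0) := by
  rw [hs.hasSum_iff_tendsto_nat]
  simpa only [sum_range_sub] using hg.sub_const (g 0)

theorem one_add_ne_zero_of_norm_lt_one {x : ℂ} (hx : ‖x‖ < 1) : 1 + x ≠ 0 := fun h ↦ by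
  simp [eq_neg_of_add_eq_zero_right h] at hx

section QPochhammer

variable {q a : ℂ}

theorem qPoch_succ (q a : ℂ) (n : ℕ) : qPoch q a (n + 1) = qPoch q a n * (1 - a * q ^ n) :=
  prod_range_succ _ n

theorem norm_mul_pow_lt_one (hq : ‖q‖ ≤ 1) (ha : ‖a‖ < 1) (j : ℕ) : ‖a * q ^ j‖ < 1 := by
  rw [norm_mul, norm_pow]
  exact (mul_le_of_le_one_right (norm_nonneg a) (pow_le_one₀ (norm_nonneg q) hq)).trans_lt ha

theorem one_sub_mul_pow_ne_zero (hq : ‖q‖ ≤ 1) (ha : ‖a‖ < 1) (j : ℕ) : 1 - a * q ^ j ≠ 0 := by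
  rw [sub_ne_zero]
  intro h
  simpa [← h] using norm_mul_pow_lt_one hq ha j

theorem summable_norm_mul_pow (hq : ‖q‖ < 1) (a : ℂ) : Summable fun j : ℕ ↦ ‖-(a * q ^ j)‖ := by
  simpa only [norm_neg, norm_mul, norm_pow] using
    (summable_geometric_of_lt_one (norm_nonneg q) hq).mul_left ‖a‖

theorem multipliable_one_sub_mul_pow (hq : ‖q‖ < 1) (a : ℂ) :
    Multipliable fun j : ℕ ↦ 1 - a * q ^ j := by
  simpa only [sub_eq_add_neg] using multipliable_one_add_of_summable (summable_norm_mul_pow hq a)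

theorem tendsto_qPoch (hq : ‖q‖ < 1) (a : ℂ) :
    Tendsto (qPoch q a) atTop (𝓝 (qPochInf q a)) :=
  (multipliable_one_sub_mul_pow hq a).hasProd.tendsto_prod_nat

theorem qPochInf_ne_zero (hq : ‖q‖ < 1) (ha : ‖a‖ < 1) : qPochInf q a ≠ 0 := by
  simpa only [qPochInf, sub_eq_add_neg] using
    tprod_one_add_ne_zero_of_summable (f := fun j : ℕ ↦ -(a * q ^ j))
      (by simpa only [← sub_eq_add_neg] using one_sub_mul_pow_ne_zero hq.le ha)
      (summable_norm_mul_pow hq a)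

theorem qPoch_ne_zero (hq : ‖q‖ ≤ 1) (ha : ‖a‖ < 1) (n : ℕ) : qPoch q a n ≠ 0 :=
  prod_ne_zero_iff.2 fun j _ ↦ one_sub_mul_pow_ne_zero hq ha j

theorem qPoch_mul_qPochInf (hq : ‖q‖ < 1) (a : ℂ) (n : ℕ) :
    qPoch q a n * qPochInf q (a * q ^ n) = qPochInf q a := by
  have h : Multipliable fun j : ℕ ↦ 1 - a * q ^ (j + n) :=
    (multipliable_one_sub_mul_pow hq (a * q ^ n)).congr fun j ↦ by ring
  rw [qPochInf, qPochInf, ← Multipliable.prod_mul_tprod_nat_mul' (f := fun j ↦ 1 - a * q ^ j) h]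
  exact congrArg _ (tprod_congr fun j ↦ by ring)

theorem qPochInf_eq_one_sub_mul (hq : ‖q‖ < 1) (a : ℂ) :
    qPochInf q a = (1 - a) * qPochInf q (a * q) := by
  simpa [qPoch] using (qPoch_mul_qPochInf hq a 1).symm

theorem tendsto_qPochInf_mul_pow (hq : ‖q‖ < 1) (ha : ‖a‖ < 1) :
    Tendsto (fun n ↦ qPochInf q (a * q ^ n)) atTop (𝓝 1) := by
  have h := tendsto_const_nhds (x := qPochInf q a) (f := atTop) |>.div (tendsto_qPoch hq a)
    (qPochInf_ne_zero hq ha)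
  rw [div_self (qPochInf_ne_zero hq ha)] at h
  refine h.congr fun n ↦ ?_
  rw [Pi.div_apply, div_eq_iff (qPoch_ne_zero hq.le ha n), ← qPoch_mul_qPochInf hq a n, mul_comm]

end QPochhammer

noncomputable def seriesTerm (q : ℂ) (n : ℕ) : ℂ :=
  q ^ (n + 1) * qPochInf q (q ^ (n + 1)) * qPoch (q ^ 3) (q ^ 3) n /
    (qPochInf q (-q ^ (n + 2)) * qPoch (q ^ 3) (-q ^ 3) (n + 1))

noncomputable def telescopeTerm (q : ℂ) (n : ℕ) : ℂ :=
  qPochInf q (q ^ (n + 1)) * qPoch (q ^ 3) (q ^ 3) n /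
    (qPochInf q (-q ^ (n + 1)) * qPoch (q ^ 3) (-q ^ 3) n)

section

variable {q : ℂ} (hq : ‖q‖ < 1)
include hq

theorem norm_pow_lt_one {m : ℕ} (hm : m ≠ 0) : ‖q ^ m‖ < 1 := by
  simpa [norm_pow] using pow_lt_one₀ (norm_nonneg q) hq hm

theorem seriesTerm_eq_sub (n : ℕ) :
    seriesTerm q n = telescopeTerm q (n + 1) / 2 - telescopeTerm q n / 2 := by
  set x := q ^ (n + 1) with hx
  have hq3 : ‖q ^ 3‖ < 1 := norm_pow_lt_one hq three_ne_zero
  have hx1 : ‖x‖ < 1 := norm_pow_lt_one hq n.succ_ne_zero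
  have hpos : qPochInf q x = (1 - x) * qPochInf q (q ^ (n + 2)) := by
    rw [qPochInf_eq_one_sub_mul hq, hx, ← pow_succ]
  have hneg : qPochInf q (-x) = (1 + x) * qPochInf q (-q ^ (n + 2)) := by
    rw [qPochInf_eq_one_sub_mul hq, hx, sub_neg_eq_add, neg_mul, ← pow_succ]
  have hpos3 : qPoch (q ^ 3) (q ^ 3) (n + 1) = qPoch (q ^ 3) (q ^ 3) n * (1 - x ^ 3) := by
    rw [qPoch_succ, hx]
    ring
  have hneg3 : qPoch (q ^ 3) (-q ^ 3) (n + 1) = qPoch (q ^ 3) (-q ^ 3) n * (1 + x ^ 3) := by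
    rw [qPoch_succ, hx]
    ring
  have hM : qPochInf q (-q ^ (n + 2)) ≠ 0 :=
    qPochInf_ne_zero hq (by simpa using norm_pow_lt_one hq (n + 1).succ_ne_zero)
  have hB : qPoch (q ^ 3) (-q ^ 3) n ≠ 0 := qPoch_ne_zero hq3.le (by simpa using hq3) n
  have h1 : 1 + x ≠ 0 := one_add_ne_zero_of_norm_lt_one hx1
  have h3 : 1 + x ^ 3 ≠ 0 := one_add_ne_zero_of_norm_lt_one <| by
    simpa [norm_pow] using pow_lt_one₀ (norm_nonneg x) hx1 three_ne_zero
  rw [seriesTerm, telescopeTerm, telescopeTerm, ← hx, hpos, hneg, hpos3, hneg3]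
  field_simp
  ring

theorem tendsto_qPochInf_pow_succ {c : ℂ} (hc : ‖c‖ ≤ 1) :
    Tendsto (fun n ↦ qPochInf q (c * q ^ (n + 1))) atTop (𝓝 1) := by
  have hcq : ‖c * q‖ < 1 := by
    simpa [mul_comm] using norm_mul_pow_lt_one hc hq 1
  refine (tendsto_qPochInf_mul_pow hq hcq).congr fun n ↦ ?_
  rw [mul_assoc, ← pow_succ']

theorem qPochInf_neg_pow_three_ne_zero : qPochInf (q ^ 3) (-q ^ 3) ≠ 0 := by
  have hq3 : ‖q ^ 3‖ < 1 := norm_pow_lt_one hq three_ne_zero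
  exact qPochInf_ne_zero hq3 (by rwa [norm_neg])

theorem tendsto_telescopeTerm :
    Tendsto (telescopeTerm q) atTop
      (𝓝 (qPochInf (q ^ 3) (q ^ 3) / qPochInf (q ^ 3) (-q ^ 3))) := by
  have hq3 : ‖q ^ 3‖ < 1 := norm_pow_lt_one hq three_ne_zero
  have hnum := (tendsto_qPochInf_pow_succ hq (c := 1) (by simp)).mul (tendsto_qPoch hq3 (q ^ 3))
  have hden := (tendsto_qPochInf_pow_succ hq (c := -1) (by simp)).mul (tendsto_qPoch hq3 (-q ^ 3))
  have h := hnum.div hden (by simpa using qPochInf_neg_pow_three_ne_zero hq)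
  rw [one_mul, one_mul] at h
  exact h.congr fun n ↦ by simp [telescopeTerm]

theorem summable_seriesTerm : Summable (seriesTerm q) := by
  have hq3 : ‖q ^ 3‖ < 1 := norm_pow_lt_one hq three_ne_zero
  have hnum := (tendsto_qPochInf_pow_succ hq (c := 1) (by simp)).mul (tendsto_qPoch hq3 (q ^ 3))
  have hden := ((tendsto_qPochInf_pow_succ hq (c := -1) (by simp)).mul
    (tendsto_qPoch hq3 (-q ^ 3))).comp (tendsto_add_atTop_nat 1)
  have hratio := (hnum.div hden (by simpa using qPochInf_neg_pow_three_ne_zero hq)).const_mul q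
  have hO := (isBigO_refl (fun n ↦ q ^ n) atTop).mul (hratio.isBigO_one ℂ)
  simp only [mul_one] at hO
  refine summable_of_isBigO_nat' (F := ℂ) (summable_geometric_of_norm_lt_one hq) ?_
  refine hO.congr_left fun n ↦ ?_
  simp only [seriesTerm, Pi.div_apply, Function.comp_apply, one_mul, neg_one_mul]
  ring_nf

end

theorem thmA2_c (q : ℂ) (hq : ‖q‖ < 1) :
    ∑' n : ℕ, q ^ (n + 1) * qPochInf q (q ^ (n + 1)) * qPoch (q ^ 3) (q ^ 3) n /
        (qPochInf q (-q ^ (n + 2)) * qPoch (q ^ 3) (-q ^ 3) (n + 1))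
      = (1 / 2) * (qPochInf (q ^ 3) (q ^ 3) / qPochInf (q ^ 3) (-q ^ 3) -
          qPochInf q q / qPochInf q (-q)) := by
  have hterm : seriesTerm q = fun n ↦ telescopeTerm q (n + 1) / 2 - telescopeTerm q n / 2 :=
    funext (seriesTerm_eq_sub hq)
  have hsum := hasSum_succ_sub_of_tendsto (hterm ▸ summable_seriesTerm hq)
    ((tendsto_telescopeTerm hq).div_const 2)
  have hzero : telescopeTerm q 0 = qPochInf q q / qPochInf q (-q) := by
    simp [telescopeTerm, qPoch]
  change ∑' n, seriesTerm q n = _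
  rw [hterm, hsum.tsum_eq, hzero]
  ring
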